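/- arXiv:1206.4165 — 5 statements merged into one kernel-verified Lean document; each statement's English description precedes it below -/
import Mathlib

section
/- Let K ⊂ L be an extension of differential fields with constants C ⊂ D. If α ∈ L is algebraic over C, then the minimal monic polynomial of α over K has all its coefficients in C. -/
/-- Let K ⊂ L be an extension of differential fields with constants C ⊂ D.
If α ∈ L is algebraic over C, then the minimal monic polynomial of α over K (a monic
polynomial q with coefficients in K vanishing at α, of least degree) has all its
coefficients in C, i.e. all its coefficients are constants. -/
theorem stmt_2 (L : Type) [Field L] [CharZero L] (K : Subfield L) (d : L → L)
    (hd_add : ∀ a b : L, d (a + b) = d a + d b)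
    (hd_mul : ∀ a b : L, d (a * b) = a * d b + d a * b)
    (hK : ∀ x ∈ K, d x ∈ K)
    (α : L)
    (halg : ∃ p : Polynomial L, p.Monic ∧ (∀ i, p.coeff i ∈ K ∧ d (p.coeff i) = 0) ∧
      p.eval α = 0)
    (q : Polynomial L) (hq_monic : q.Monic) (hq_coeff : ∀ i, q.coeff i ∈ K)
    (hq_root : q.eval α = 0)
    (hq_min : ∀ r : Polynomial L, r.Monic → (∀ i, r.coeff i ∈ K) → r.eval α = 0 →
      q.degree ≤ r.degree) :
    ∀ i, d (q.coeff i) = 0 := by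
  classical
  -- basic facts about d
  have hd0 : d 0 = 0 := by
    have h : d 0 = d 0 + d 0 := by simpa using hd_add 0 0
    exact (left_eq_add.mp h)
  have hd1 : d 1 = 0 := by
    have h : d 1 = d 1 + d 1 := by simpa using hd_mul 1 1
    exact (left_eq_add.mp h)
  have hdinv : ∀ x : L, d x = 0 → d x⁻¹ = 0 := by
    intro x hx
    by_cases hx0 : x = 0
    · simp [hx0, hd0]
    · have h : d (x * x⁻¹) = x * d x⁻¹ + d x * x⁻¹ := hd_mul x x⁻¹
      rw [mul_inv_cancel₀ hx0, hd1, hx] at h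
      have : x * d x⁻¹ = 0 := by linear_combination -h
      rcases mul_eq_zero.mp this with h' | h'
      · exact absurd h' hx0
      · exact h'
  -- the constants of L form a subfield
  set C₀ : Subfield L :=
    { carrier := {x | d x = 0}
      mul_mem' := fun {a b} ha hb => by
        have : d (a * b) = a * d b + d a * b := hd_mul a b
        simp only [Set.mem_setOf_eq] at ha hb ⊢
        rw [this, ha, hb]; ring
      one_mem' := hd1
      add_mem' := fun {a b} ha hb => by
        simp only [Set.mem_setOf_eq] at ha hb ⊢
        rw [hd_add, ha, hb, add_zero]
      zero_mem' := hd0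
      neg_mem' := fun {a} ha => by
        simp only [Set.mem_setOf_eq] at ha ⊢
        have h : d (a + -a) = d a + d (-a) := hd_add a (-a)
        rw [add_neg_cancel, hd0, ha, zero_add] at h
        exact h.symm
      inv_mem' := fun a ha => hdinv a ha } with hC₀
  have hmemC₀ : ∀ x : L, x ∈ C₀ ↔ d x = 0 := fun x => Iff.rfl
  -- d as a derivation over C₀
  have hsmul : ∀ (c : C₀) (x : L), d ((c : L) * x) = (c : L) * d x := by
    intro c x
    have := hd_mul (c : L) x
    rw [c.2, zero_mul, add_zero] at this
    exact this
  let D' : Derivation C₀ L L :=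
    { toFun := d
      map_add' := hd_add
      map_smul' := fun c x => by
        simp only [RingHom.id_apply, Algebra.smul_def]
        exact hsmul c x
      map_one_eq_zero' := hd1
      leibniz' := fun a b => by
        simp only [LinearMap.coe_mk, AddHom.coe_mk, smul_eq_mul]
        rw [hd_mul]; ring }
  have hD' : ∀ x : L, D' x = d x := fun _ => rfl
  -- α is integral over C₀
  obtain ⟨p, hp_monic, hp_coeff, hp_root⟩ := halg
  have hplifts : p ∈ Polynomial.lifts (algebraMap C₀ L) := by
    rw [Polynomial.lifts_iff_coeff_lifts]
    intro n
    exact ⟨⟨p.coeff n, (hp_coeff n).2⟩, rfl⟩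
  obtain ⟨p', hp'map, _, hp'monic⟩ :=
    Polynomial.lifts_and_degree_eq_and_monic hplifts hp_monic
  have hint : IsIntegral C₀ α := by
    refine ⟨p', hp'monic, ?_⟩
    have hem := Polynomial.eval_map (algebraMap C₀ L) α (p := p')
    rw [← hem, hp'map]
    exact hp_root
  -- the minimal polynomial over C₀ is separable, so its derivative doesn't vanish at α
  haveI : CharZero C₀ := RingHom.charZero C₀.subtype
  set m := minpoly C₀ α with hm
  have hsep : m.Separable := (minpoly.irreducible hint).separable
  obtain ⟨a, b, hab⟩ := hsep
  have hab' : Polynomial.aeval α a * Polynomial.aeval α m +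
      Polynomial.aeval α b * Polynomial.aeval α (Polynomial.derivative m) = 1 := by
    have := congrArg (Polynomial.aeval α) hab
    simpa using this
  have hm_root : Polynomial.aeval α m = 0 := minpoly.aeval C₀ α
  have hm'ne : Polynomial.aeval α (Polynomial.derivative m) ≠ 0 := by
    intro h
    rw [hm_root, h, mul_zero, mul_zero, add_zero] at hab'
    simp at hab'
  -- hence d α = 0
  have hdα : d α = 0 := by
    have h := D'.comp_aeval_eq (a := α) m
    rw [hm_root, map_zero] at h
    have h' : (0 : L) = Polynomial.aeval α (Polynomial.derivative m) * d α := by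
      simpa [hD', smul_eq_mul] using h
    rcases mul_eq_zero.mp h'.symm with h'' | h''
    · exact absurd h'' hm'ne
    · exact h''
  -- powers of α are constants
  have hdpow : ∀ n : ℕ, d (α ^ n) = 0 := by
    intro n
    induction n with
    | zero => simpa using hd1
    | succ n ih =>
      rw [pow_succ, hd_mul, hdα, ih, mul_zero, zero_mul, add_zero]
  -- d as additive map, to push through sums
  let D : L →+ L := { toFun := d, map_zero' := hd0, map_add' := hd_add }
  have hD : ∀ x : L, D x = d x := fun _ => rfl
  -- d of an evaluation
  have heval : ∀ r : Polynomial L,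
      d (r.eval α) = ∑ i ∈ Finset.range (r.natDegree + 1), d (r.coeff i) * α ^ i := by
    intro r
    rw [Polynomial.eval_eq_sum_range, ← hD, map_sum]
    refine Finset.sum_congr rfl fun i _ => ?_
    rw [hD, hd_mul, hdpow, mul_zero, zero_add]
  -- the polynomial of derivatives of coefficients
  set E : Polynomial L :=
    ∑ i ∈ Finset.range (q.natDegree + 1), Polynomial.C (d (q.coeff i)) * Polynomial.X ^ i
    with hE
  have hEcoeff : ∀ j, E.coeff j =
      if j ∈ Finset.range (q.natDegree + 1) then d (q.coeff j) else 0 := by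
    intro j
    rw [hE, Polynomial.finset_sum_coeff]
    simp [Polynomial.coeff_C_mul, Polynomial.coeff_X_pow, Finset.sum_ite_eq]
  have hEroot : E.eval α = 0 := by
    rw [hE]
    simp only [Polynomial.eval_finset_sum, Polynomial.eval_mul, Polynomial.eval_C,
      Polynomial.eval_pow, Polynomial.eval_X]
    rw [← heval q, hq_root, hd0]
  have hEdeg : E.degree < q.degree := by
    rw [Polynomial.degree_eq_natDegree hq_monic.ne_zero,
      Polynomial.degree_lt_iff_coeff_zero]
    intro mm hmm
    rw [hEcoeff]
    split_ifs with h
    · have hmm' : mm = q.natDegree :=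
        le_antisymm (Nat.lt_succ_iff.mp (Finset.mem_range.mp h)) hmm
      rw [hmm', hq_monic.coeff_natDegree, hd1]
    · rfl
  have hEzero : E = 0 := by
    by_contra hEne
    have hc : E.leadingCoeff ≠ 0 := Polynomial.leadingCoeff_ne_zero.mpr hEne
    set r : Polynomial L := E * Polynomial.C (E.leadingCoeff)⁻¹ with hr
    have hrmonic : r.Monic := Polynomial.monic_mul_leadingCoeff_inv hEne
    have hEK : ∀ j, E.coeff j ∈ K := by
      intro j
      rw [hEcoeff]
      split_ifs with h
      · exact hK _ (hq_coeff j)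
      · exact zero_mem K
    have hrcoeff : ∀ j, r.coeff j ∈ K := by
      intro j
      rw [hr, Polynomial.coeff_mul_C]
      exact mul_mem (hEK j) (K.inv_mem (hEK E.natDegree))
    have hrroot : r.eval α = 0 := by
      rw [hr, Polynomial.eval_mul, hEroot, zero_mul]
    have hle := hq_min r hrmonic hrcoeff hrroot
    have hrdeg : r.degree = E.degree := by
      rw [hr, Polynomial.degree_mul, Polynomial.degree_C (inv_ne_zero hc), add_zero]
    rw [hrdeg] at hle
    exact absurd (lt_of_le_of_lt hle hEdeg) (lt_irrefl _)
  intro i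
  by_cases hi : i ≤ q.natDegree
  · have := hEcoeff i
    rw [hEzero] at this
    simp only [Polynomial.coeff_zero] at this
    rw [if_pos (Finset.mem_range.mpr (Nat.lt_succ_iff.mpr hi))] at this
    exact this.symm
  · rw [Polynomial.coeff_eq_zero_of_natDegree_lt (lt_of_not_ge hi), hd0]
end

section
/- Let K be a differential field with field of constants C, and let D be an algebraic field extension of C. Then the tensor product D ⊗_C K is a field (with derivation extending that of K by acting as zero on D), and its field of constants is D. -/
/-!
A derivation over `C` kills every element separable over `C`, so in characteristic 0 the
constants `C` are algebraically closed in `K`. Monic factors over `K` of a monic polynomial over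
`C` have coefficients integral over `C`, hence in `C`; so the minimal polynomial of a primitive
element of a finite subextension `E` of `D/C` stays irreducible over `K`, and
`K ⊗ E ≅ K[X]/(minpoly)` is a field. Every element of `D ⊗ K` comes from some such `E ⊗ K`, so
`D ⊗ K` is a field. Finally `D` is flat over `C`, so tensoring the exact sequence
`0 → C → K → K` (last map `∂`) with `D` identifies the kernel of `id ⊗ ∂` with `D ⊗ 1`.
-/

open TensorProduct Polynomial

theorem Derivation.map_eq_zero_of_isSeparable {C K : Type*} [CommRing C] [Field K] [Algebra C K]
    (D : Derivation C K K) {x : K} (hx : IsSeparable C x) : D x = 0 := by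
  have h := D.map_aeval (minpoly C x) x
  rw [minpoly.aeval, map_zero, smul_eq_mul, eq_comm] at h
  exact (mul_eq_zero.1 h).resolve_left (hx.aeval_derivative_ne_zero (minpoly.aeval C x))

theorem Derivation.isIntegrallyClosedIn_of_ker_le_range {C K : Type*} [Field C] [PerfectField C]
    [Field K] [Algebra C K] (D : Derivation C K K)
    (hD : ∀ x, D x = 0 → ∃ c : C, x = algebraMap C K c) : IsIntegrallyClosedIn C K := by
  refine ⟨(algebraMap C K).injective, fun {x} => ⟨fun hx => ?_, ?_⟩⟩
  · obtain ⟨c, rfl⟩ := hD x (D.map_eq_zero_of_isSeparable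
      (PerfectField.separable_of_irreducible (minpoly.irreducible hx)))
    exact ⟨c, rfl⟩
  · rintro ⟨c, rfl⟩
    exact isIntegral_algebraMap

theorem IsIntegrallyClosedIn.mem_lifts_of_monic_of_dvd_map {C K : Type*} [CommRing C] [Field K]
    [Algebra C K] [IsIntegrallyClosedIn C K] {p : C[X]} (hp : p.Monic) {g : K[X]} (hg : g.Monic)
    (hdvd : g ∣ p.map (algebraMap C K)) : g ∈ lifts (algebraMap C K) := by
  have h := integralClosure.mem_lifts_of_monic_of_dvd_map K hp hg hdvd
  rw [lifts_iff_coeff_lifts] at h ⊢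
  intro n
  obtain ⟨y, hy⟩ := h n
  obtain ⟨c, hc⟩ := IsIntegrallyClosedIn.algebraMap_eq_of_integral (R := C) y.2
  exact ⟨c, hc.trans hy⟩

theorem Polynomial.Monic.irreducible_map_of_isIntegrallyClosedIn {C K : Type*} [Field C] [Field K]
    [Algebra C K] [IsIntegrallyClosedIn C K] {p : C[X]} (hp : p.Monic) (hirr : Irreducible p) :
    Irreducible (p.map (algebraMap C K)) := by
  have hinj := map_injective _ (algebraMap C K).injective
  rw [(hp.map _).irreducible_iff_natDegree]
  rw [hp.irreducible_iff_natDegree] at hirr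
  refine ⟨fun h => hirr.1 (hinj (by rwa [Polynomial.map_one])), fun f g hf hg hfg => ?_⟩
  obtain ⟨f', rfl, hf'deg, hf'⟩ := lifts_and_natDegree_eq_and_monic
    (IsIntegrallyClosedIn.mem_lifts_of_monic_of_dvd_map hp hf (Dvd.intro g hfg)) hf
  obtain ⟨g', rfl, hg'deg, hg'⟩ := lifts_and_natDegree_eq_and_monic
    (IsIntegrallyClosedIn.mem_lifts_of_monic_of_dvd_map hp hg (Dvd.intro_left _ hfg)) hg
  rw [← Polynomial.map_mul] at hfg
  rw [← hf'deg, ← hg'deg]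
  exact hirr.2 f' g' hf' hg' (hinj hfg)

theorem Algebra.TensorProduct.isField_of_finiteDimensional {C K E : Type*} [Field C] [Field K]
    [Field E] [Algebra C K] [Algebra C E] [IsIntegrallyClosedIn C K] [FiniteDimensional C E]
    [Algebra.IsSeparable C E] : IsField (K ⊗[C] E) := by
  let pb := Field.powerBasisOfFiniteOfSeparable C E
  have hgen : IsIntegral C pb.gen := pb.isIntegral_gen
  let q := (minpoly C pb.gen).map (algebraMap C K)
  have : Fact (Irreducible q) := ⟨(minpoly.monic hgen).irreducible_map_of_isIntegrallyClosedIn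
    (minpoly.irreducible hgen)⟩
  have hroot : aeval ((1 : K) ⊗ₜ[C] pb.gen) q = 0 := by
    rw [aeval_map_algebraMap, ← Algebra.TensorProduct.includeRight_apply, aeval_algHom_apply,
      minpoly.aeval, map_zero]
  let φ := AdjoinRoot.liftAlgHom q (Algebra.ofId K (K ⊗[C] E)) _ hroot
  have hsurj : φ.range = ⊤ := by
    rw [← top_le_iff, ← Algebra.TensorProduct.adjoin_one_tmul_image_eq_top
      {pb.gen} pb.adjoin_gen_eq_top, Set.image_singleton, Algebra.adjoin_le_iff,
      Set.singleton_subset_iff]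
    exact ⟨AdjoinRoot.root q, AdjoinRoot.liftAlgHom_root ..⟩
  have hbij : Function.Bijective φ := ⟨φ.toRingHom.injective, (AlgHom.range_eq_top φ).1 hsurj⟩
  exact (AlgEquiv.ofBijective φ hbij).symm.toMulEquiv.isField (Field.toIsField _)

theorem Algebra.TensorProduct.range_map_val_mono {C K D : Type*} [Field C] [Field D] [CommRing K]
    [Algebra C D] [Algebra C K] {E F : IntermediateField C D} (h : E ≤ F) :
    (map E.val (AlgHom.id C K)).range ≤ (map F.val (AlgHom.id C K)).range := by
  have : map E.val (AlgHom.id C K) =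
      (map F.val (AlgHom.id C K)).comp (map (IntermediateField.inclusion h) (AlgHom.id C K)) := by
    rw [← map_comp]; rfl
  rw [this]
  exact AlgHom.range_comp_le_range _ _

theorem Algebra.TensorProduct.exists_finiteDimensional_mem_range_map {C K D : Type*} [Field C]
    [Field D] [CommRing K] [Algebra C D] [Algebra C K] [Algebra.IsIntegral C D] (t : D ⊗[C] K) :
    ∃ E : IntermediateField C D, FiniteDimensional C E ∧
      t ∈ (map E.val (AlgHom.id C K)).range := by
  induction t using TensorProduct.induction_on with
  | zero => exact ⟨⊥, inferInstance, zero_mem _⟩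
  | tmul x k =>
    exact ⟨IntermediateField.adjoin C {x},
      IntermediateField.adjoin.finiteDimensional (Algebra.IsIntegral.isIntegral x),
      ⟨⟨x, IntermediateField.mem_adjoin_simple_self C x⟩ ⊗ₜ k, rfl⟩⟩
  | add t u ht hu =>
    obtain ⟨E, _, hE⟩ := ht
    obtain ⟨F, _, hF⟩ := hu
    exact ⟨E ⊔ F, inferInstance, add_mem (range_map_val_mono le_sup_left hE)
      (range_map_val_mono le_sup_right hF)⟩

theorem Algebra.TensorProduct.isField_of_isSeparable {C K D : Type*} [Field C] [Field K]
    [Field D] [Algebra C K] [Algebra C D] [IsIntegrallyClosedIn C K] [Algebra.IsSeparable C D] :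
    IsField (D ⊗[C] K) := by
  refine ⟨exists_pair_ne _, mul_comm, fun {t} ht => ?_⟩
  obtain ⟨E, _, s, rfl⟩ := exists_finiteDimensional_mem_range_map (K := K) t
  have hE : IsField (E ⊗[C] K) :=
    (Algebra.TensorProduct.comm C E K).toMulEquiv.isField isField_of_finiteDimensional
  obtain ⟨s', hs'⟩ := hE.mul_inv_cancel (a := s) (fun hs => ht (by rw [hs, map_zero]))
  exact ⟨map E.val (AlgHom.id C K) s', by
    rw [AlgHom.toRingHom_eq_coe, RingHom.coe_coe, ← map_mul, hs', map_one]⟩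

theorem LinearMap.lTensor_eq_zero_iff_of_exact_algebraMap {C K M : Type*} [CommRing C] [CommRing K]
    [Algebra C K] [AddCommGroup M] [Module C M] [Module.Flat C M] {d : K →ₗ[C] K}
    (hd : Function.Exact (Algebra.linearMap C K) d) (t : M ⊗[C] K) :
    d.lTensor M t = 0 ↔ ∃ x : M, t = x ⊗ₜ[C] (1 : K) := by
  have hrid : ⇑((Algebra.linearMap C K).lTensor M) ∘ (TensorProduct.rid C M).symm =
      fun x => x ⊗ₜ[C] (1 : K) := by
    ext x; simp
  rw [Module.Flat.lTensor_exact M hd t, ← (TensorProduct.rid C M).symm.surjective.range_comp,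
    hrid]
  exact exists_congr fun x => eq_comm

/-- Let K be a differential field (char 0) with field of constants C, and
let D be an algebraic field extension of C. Then D ⊗_C K is a field (with the
derivation id_D ⊗ ∂ extending that of K), and its field of constants is D
(i.e. the constants are exactly the elements of the form x ⊗ 1 with x ∈ D). -/
theorem stmt_5 (C K D : Type) [Field C] [CharZero C] [Field K] [Field D]
    [Algebra C K] [Algebra C D] [Algebra.IsAlgebraic C D]
    (d : K →ₗ[C] K)
    (hd_mul : ∀ a b : K, d (a * b) = a * d b + d a * b)
    (hconst : ∀ x : K, d x = 0 ↔ ∃ c : C, x = algebraMap C K c) :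
    IsField (D ⊗[C] K) ∧
      ∀ t : D ⊗[C] K, (LinearMap.lTensor D d) t = 0 ↔ ∃ x : D, t = x ⊗ₜ[C] (1 : K) := by
  let δ : Derivation C K K := Derivation.mk' d fun a b => by
    rw [hd_mul, smul_eq_mul, smul_eq_mul, mul_comm b]
  have : IsIntegrallyClosedIn C K := δ.isIntegrallyClosedIn_of_ker_le_range fun x => (hconst x).1
  have hexact : Function.Exact (Algebra.linearMap C K) d := fun x => by
    rw [hconst x]; exact exists_congr fun c => eq_comm
  exact ⟨Algebra.TensorProduct.isField_of_isSeparable,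
    LinearMap.lTensor_eq_zero_iff_of_exact_algebraMap hexact⟩
end

section
/- Let K be a differential field with constants C, let L be a differential field extension of K whose field of constants is the algebraic closure of C, and let D be an algebraic extension of C inside that algebraic closure. Then the canonical map D ⊗_C K → L, d ⊗ f ↦ df, is an injective homomorphism of differential rings (i.e., a differential field embedding). -/
/-!
Constants of `L` that are linearly independent over the constants `C` of `K` stay linearly
independent over `K`: in a shortest `K`-linear relation, normalised to have a coefficient `1`,
differentiating kills that coefficient and gives a shorter relation, so all coefficients are
constants, i.e. lie in `C`. Applied to the image of a `C`-basis of `D`, this makes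
`D ⊗[C] K → L` injective.
-/

open TensorProduct

section LinearIndependence

variable {K L : Type*} [Field K] [Field L] [Algebra K L] {dK : K → K} {dL : L →+ L}
  {ι : Type*} {w : ι → L}

theorem sum_deriv_smul_eq_zero
    (hdL_mul : ∀ a b : L, dL (a * b) = a * dL b + dL a * b)
    (hcompat : ∀ x : K, dL (algebraMap K L x) = algebraMap K L (dK x))
    (hw : ∀ i, dL (w i) = 0) {s : Finset ι} {g : ι → K}
    (hg : ∑ i ∈ s, g i • w i = 0) : ∑ i ∈ s, dK (g i) • w i = 0 := by
  have h := congrArg dL hg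
  rw [map_sum, map_zero] at h
  rw [← h]
  refine Finset.sum_congr rfl fun i _ => ?_
  rw [Algebra.smul_def, Algebra.smul_def, hdL_mul, hw, mul_zero, zero_add, hcompat]

variable {C : Type*} [CommRing C] [Algebra C K] [Algebra C L] [IsScalarTower C K L]

theorem eq_zero_of_sum_smul_eq_zero_of_deriv_eq_zero
    (hKconst : ∀ x : K, dK x = 0 → ∃ c : C, x = algebraMap C K c)
    (hwC : LinearIndependent C w) {s : Finset ι} {g : ι → K}
    (hg : ∑ i ∈ s, g i • w i = 0) (hconst : ∀ i ∈ s, dK (g i) = 0) :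
    ∀ i ∈ s, g i = 0 := by
  classical
  choose c hc using fun i (hi : i ∈ s) => hKconst (g i) (hconst i hi)
  let c' : ι → C := fun i => if hi : i ∈ s then c i hi else 0
  have hgc : ∀ i ∈ s, g i = algebraMap C K (c' i) := fun i hi => by
    simp only [c', dif_pos hi, ← hc]
  have hc'0 : ∑ i ∈ s, c' i • w i = 0 := by
    rw [← hg]
    refine Finset.sum_congr rfl fun i hi => ?_
    rw [hgc i hi, algebraMap_smul]
  intro i hi
  rw [hgc i hi, linearIndependent_iff'.mp hwC s c' hc'0 i hi, map_zero]

theorem linearIndependent_of_linearIndependent_constants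
    (hdL_mul : ∀ a b : L, dL (a * b) = a * dL b + dL a * b)
    (hcompat : ∀ x : K, dL (algebraMap K L x) = algebraMap K L (dK x))
    (hKconst : ∀ x : K, dK x = 0 → ∃ c : C, x = algebraMap C K c)
    (hw : ∀ i, dL (w i) = 0) (hwC : LinearIndependent C w) :
    LinearIndependent K w := by
  classical
  have hdK_one : dK 1 = 0 := by
    have h := hdL_mul 1 1
    rw [mul_one, one_mul, mul_one, right_eq_add] at h
    rw [← map_one (algebraMap K L), hcompat] at h
    exact (algebraMap K L).injective (h.trans (map_zero _).symm)
  rw [linearIndependent_iff']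
  intro s
  induction s using Finset.strongInduction with
  | _ s ih =>
    intro g hg
    by_contra! hne
    obtain ⟨j, hj, hgj⟩ := hne
    set g' : ι → K := fun i => (g j)⁻¹ * g i
    have hg'j : g' j = 1 := inv_mul_cancel₀ hgj
    have hg' : ∑ i ∈ s, g' i • w i = 0 := by
      simp only [g', mul_smul, ← Finset.smul_sum, hg, smul_zero]
    have hdg' := sum_deriv_smul_eq_zero hdL_mul hcompat hw hg'
    have hshorter : ∑ i ∈ s.erase j, dK (g' i) • w i = 0 := by
      rw [Finset.sum_erase_eq_sub hj, hdg', hg'j, hdK_one, zero_smul, sub_zero]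
    have hconst : ∀ i ∈ s, dK (g' i) = 0 := fun i hi => by
      rcases eq_or_ne i j with rfl | hij
      · rw [hg'j, hdK_one]
      · exact ih _ (Finset.erase_ssubset hj) _ hshorter i (Finset.mem_erase.mpr ⟨hij, hi⟩)
    have h0 := eq_zero_of_sum_smul_eq_zero_of_deriv_eq_zero hKconst hwC hg' hconst j hj
    exact one_ne_zero (hg'j.symm.trans h0)

end LinearIndependence

section ProductMap

variable {C D K L : Type*} [CommRing C] [CommRing D] [CommRing K] [CommRing L]
  [Algebra C K] [Algebra C D] [Algebra C L] [Algebra K L] [Algebra D L]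
  [IsScalarTower C K L] [IsScalarTower C D L]

theorem productMap_injective_of_linearIndependent {ι : Type*} (b : Module.Basis ι C D)
    (hb : LinearIndependent K fun i => algebraMap D L (b i)) :
    Function.Injective (Algebra.TensorProduct.productMap (IsScalarTower.toAlgHom C D L)
      (IsScalarTower.toAlgHom C K L)) := by
  classical
  let e : D ⊗[C] K ≃ₗ[C] ι →₀ K :=
    TensorProduct.congr b.repr (LinearEquiv.refl C K) ≪≫ₗ finsuppScalarLeft C K ι
  have hcomp : (Algebra.TensorProduct.productMap (IsScalarTower.toAlgHom C D L)
      (IsScalarTower.toAlgHom C K L)).toLinearMap ∘ₗ e.symm.toLinearMap =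
      (Finsupp.linearCombination K fun i => algebraMap D L (b i)).restrictScalars C := by
    refine Finsupp.lhom_ext fun i a => ?_
    have hsingle : e.symm (Finsupp.single i a) = b i ⊗ₜ a := by simp [e]
    simp only [LinearMap.comp_apply, LinearEquiv.coe_coe, hsingle, AlgHom.toLinearMap_apply,
      Algebra.TensorProduct.productMap_apply_tmul, LinearMap.restrictScalars_apply,
      Finsupp.linearCombination_single, Algebra.smul_def, mul_comm]
    rfl
  have hfactor : ⇑(Algebra.TensorProduct.productMap (IsScalarTower.toAlgHom C D L)
      (IsScalarTower.toAlgHom C K L)) =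
      Finsupp.linearCombination K (fun i => algebraMap D L (b i)) ∘ e := by
    funext t
    simpa using LinearMap.congr_fun hcomp (e t)
  rw [hfactor]
  exact hb.finsuppLinearCombination_injective.comp e.injective

theorem productMap_lTensor_eq_deriv {dK : K →ₗ[C] K} {dL : L →+ L}
    (hdL_mul : ∀ a b : L, dL (a * b) = a * dL b + dL a * b)
    (hcompat : ∀ x : K, dL (algebraMap K L x) = algebraMap K L (dK x))
    (hDconst : ∀ x : D, dL (algebraMap D L x) = 0) (t : D ⊗[C] K) :
    Algebra.TensorProduct.productMap (IsScalarTower.toAlgHom C D L)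
        (IsScalarTower.toAlgHom C K L) (dK.lTensor D t) =
      dL (Algebra.TensorProduct.productMap (IsScalarTower.toAlgHom C D L)
        (IsScalarTower.toAlgHom C K L) t) := by
  induction t using TensorProduct.induction_on with
  | zero => simp only [map_zero]
  | tmul d a =>
    simp only [LinearMap.lTensor_tmul, Algebra.TensorProduct.productMap_apply_tmul,
      IsScalarTower.coe_toAlgHom', hdL_mul, hcompat, hDconst, zero_mul, add_zero]
  | add x y hx hy => simp only [map_add, hx, hy]

end ProductMap

theorem stmt_6_general (C K D L : Type) [Field C] [Field K] [Field D] [Field L]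
    [Algebra C K] [Algebra C D] [Algebra C L] [Algebra K L] [Algebra D L]
    [IsScalarTower C K L] [IsScalarTower C D L]
    (dK : K →ₗ[C] K) (dL : L → L)
    (hdL_add : ∀ a b : L, dL (a + b) = dL a + dL b)
    (hdL_mul : ∀ a b : L, dL (a * b) = a * dL b + dL a * b)
    (hcompat : ∀ x : K, dL (algebraMap K L x) = algebraMap K L (dK x))
    (hKconst : ∀ x : K, dK x = 0 ↔ ∃ c : C, x = algebraMap C K c)
    (hDconst : ∀ x : D, dL (algebraMap D L x) = 0) :
    Function.Injective
      (Algebra.TensorProduct.productMap (IsScalarTower.toAlgHom C D L)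
        (IsScalarTower.toAlgHom C K L)) ∧
    ∀ t : D ⊗[C] K,
      Algebra.TensorProduct.productMap (IsScalarTower.toAlgHom C D L)
          (IsScalarTower.toAlgHom C K L) ((LinearMap.lTensor D dK) t) =
        dL (Algebra.TensorProduct.productMap (IsScalarTower.toAlgHom C D L)
          (IsScalarTower.toAlgHom C K L) t) := by
  let δ : L →+ L := AddMonoidHom.mk' dL hdL_add
  let b := Module.Basis.ofVectorSpace C D
  have hbC : LinearIndependent C fun i => algebraMap D L (b i) :=
    b.linearIndependent.map' (IsScalarTower.toAlgHom C D L).toLinearMap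
      (LinearMap.ker_eq_bot.mpr (algebraMap D L).injective)
  refine ⟨productMap_injective_of_linearIndependent b ?_,
    productMap_lTensor_eq_deriv (dL := δ) hdL_mul hcompat hDconst⟩
  exact linearIndependent_of_linearIndependent_constants (dL := δ) hdL_mul hcompat
    (fun x => (hKconst x).mp) (fun i => hDconst (b i)) hbC

/-- Let K be a differential field with constants C, let L be a differential
field extension of K whose field of constants is the algebraic closure of C (its
constants are algebraic over C and algebraically closed), and let D be an algebraic
extension of C inside the constants of L. Then the canonical map D ⊗_C K → L,
d ⊗ f ↦ df, is an injective homomorphism of differential rings (a differential field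
embedding), where the derivation on D ⊗_C K is id_D ⊗ ∂_K. -/
theorem stmt_6 (C K D L : Type) [Field C] [CharZero C] [Field K] [Field D] [Field L]
    [Algebra C K] [Algebra C D] [Algebra C L] [Algebra K L] [Algebra D L]
    [IsScalarTower C K L] [IsScalarTower C D L] [Algebra.IsAlgebraic C D]
    (dK : K →ₗ[C] K) (dL : L → L)
    (hdK_mul : ∀ a b : K, dK (a * b) = a * dK b + dK a * b)
    (hdL_add : ∀ a b : L, dL (a + b) = dL a + dL b)
    (hdL_mul : ∀ a b : L, dL (a * b) = a * dL b + dL a * b)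
    (hcompat : ∀ x : K, dL (algebraMap K L x) = algebraMap K L (dK x))
    (hKconst : ∀ x : K, dK x = 0 ↔ ∃ c : C, x = algebraMap C K c)
    (hDconst : ∀ x : D, dL (algebraMap D L x) = 0)
    (hLconst_alg : ∀ y : L, dL y = 0 → IsAlgebraic C y)
    (hLconst_closed : ∀ p : Polynomial L, (∀ i, dL (p.coeff i) = 0) → 0 < p.degree →
      ∃ y : L, dL y = 0 ∧ p.eval y = 0) :
    Function.Injective
      (Algebra.TensorProduct.productMap (IsScalarTower.toAlgHom C D L)
        (IsScalarTower.toAlgHom C K L)) ∧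
    ∀ t : D ⊗[C] K,
      Algebra.TensorProduct.productMap (IsScalarTower.toAlgHom C D L)
          (IsScalarTower.toAlgHom C K L) ((LinearMap.lTensor D dK) t) =
        dL (Algebra.TensorProduct.productMap (IsScalarTower.toAlgHom C D L)
          (IsScalarTower.toAlgHom C K L) t) :=
  stmt_6_general C K D L dK dL hdL_add hdL_mul hcompat hKconst hDconst
end

section
/- Let K be a differential field of characteristic 0. Any matrix A ∈ M_n(K[∂]) can be written as A = T U, where U ∈ M_n(K[∂]) is invertible in M_n(K[∂]) and T ∈ M_n(K[∂]) is upper triangular. -/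
/-!
Operators of order below `N` form a filtration of `K[∂]`, and `∂ ^ m * ι c ≡ ι c * ∂ ^ m`
modulo lower order. Hence if `b` has leading term `ι β * ∂ ^ m`, subtracting
`b * ι (β⁻¹ * α) * ∂ ^ (N - m)` from an operator with leading term `ι α * ∂ ^ N` lowers its order:
`K[∂]` has right division with remainder. Adding a right multiple of one column to another is an
invertible column operation, so the Euclidean algorithm clears a row to the left of any pivot
column using only the columns up to it. Clearing the rows from the bottom up, each step leaves
the rows below untouched, because they already vanish in the columns it mixes.
-/

/-- The ring of differential operators K[∂] over a differential field (K, d),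
characterized abstractly. -/
structure DiffOpRing (K : Type) [Field K] (d : K → K) (R : Type) [Ring R] where
  ι : K →+* R
  dop : R
  comm : ∀ a : K, dop * ι a = ι a * dop + ι (d a)
  repr : ∀ r : R, ∃! c : ℕ →₀ K, r = c.sum fun i a => ι a * dop ^ i

namespace ColumnReduction

variable {m n R : Type*} [Fintype n] [DecidableEq n] [Ring R]

def transvection (j k : n) (c : R) : Matrix n n R := 1 + Matrix.single j k c

lemma transvection_mul_transvection {j k : n} (hjk : j ≠ k) (c c' : R) :
    transvection j k c * transvection j k c' = transvection j k (c + c') := by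
  have hzero : Matrix.single j k c * Matrix.single j k c' = 0 :=
    Matrix.single_mul_single_of_ne c j k j hjk.symm c'
  simp only [transvection, add_mul, mul_add, one_mul, mul_one, hzero, Matrix.single_add]
  abel

lemma isUnit_transvection {j k : n} (hjk : j ≠ k) (c : R) : IsUnit (transvection j k c) :=
  ⟨⟨transvection j k c, transvection j k (-c),
    by rw [transvection_mul_transvection hjk, add_neg_cancel, transvection, Matrix.single_zero,
      add_zero],
    by rw [transvection_mul_transvection hjk, neg_add_cancel, transvection, Matrix.single_zero,
      add_zero]⟩, rfl⟩

lemma mul_transvection_apply_same (A : Matrix m n R) (i : m) (j k : n) (c : R) :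
    (A * transvection j k c) i k = A i k + A i j * c := by
  rw [transvection, Matrix.mul_add, Matrix.mul_one, Matrix.add_apply, Matrix.mul_single_apply_same]

lemma mul_transvection_apply_of_ne (A : Matrix m n R) (i : m) {j k l : n} (hl : l ≠ k) (c : R) :
    (A * transvection j k c) i l = A i l := by
  rw [transvection, Matrix.mul_add, Matrix.mul_one, Matrix.add_apply,
    Matrix.mul_single_apply_of_ne (hbj := hl), add_zero]

lemma mul_apply_of_row_eq_one {V : Matrix n n R} {l : n} (hl : ∀ p, V l p = (1 : Matrix n n R) l p)
    (W : Matrix n n R) (c : n) : (V * W) l c = W l c := by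
  simp [Matrix.mul_apply, hl, Matrix.one_apply]

lemma mul_apply_of_col_eq_one {W : Matrix n n R} {c : n} (hc : ∀ p, W p c = (1 : Matrix n n R) p c)
    (V : Matrix m n R) (l : m) : (V * W) l c = V l c := by
  simp [Matrix.mul_apply, hc, Matrix.one_apply]

def identityOutside (s : Set n) : Submonoid (Matrix n n R) where
  carrier := {V | ∀ l c, l ∉ s ∨ c ∉ s → V l c = (1 : Matrix n n R) l c}
  one_mem' _ _ _ := rfl
  mul_mem' {V W} hV hW l c hlc := by
    rcases hlc with hl | hc
    · rw [mul_apply_of_row_eq_one (fun p => hV l p (.inl hl)), hW l c (.inl hl)]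
    · rw [mul_apply_of_col_eq_one (fun p => hW p c (.inr hc)), hV l c (.inr hc)]

lemma identityOutside_mono {s t : Set n} (hst : s ⊆ t) :
    identityOutside (R := R) s ≤ identityOutside t :=
  fun _ hV l c hlc => hV l c (hlc.imp (mt (@hst l)) (mt (@hst c)))

lemma transvection_mem_identityOutside {s : Set n} {j k : n} (hj : j ∈ s) (hk : k ∈ s) (c : R) :
    transvection j k c ∈ identityOutside s := by
  intro l c' hlc
  have : ¬(j = l ∧ k = c') := by rintro ⟨rfl, rfl⟩; tauto
  simp [transvection, this]

lemma mul_apply_of_mem_identityOutside_of_notMem {s : Set n} {V : Matrix n n R}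
    (hV : V ∈ identityOutside s) (A : Matrix m n R) (i : m) {c : n} (hc : c ∉ s) :
    (A * V) i c = A i c :=
  mul_apply_of_col_eq_one (fun p => hV p c (.inr hc)) A i

lemma mul_apply_of_mem_identityOutside_of_row_eq_zero {s : Set n} {V : Matrix n n R}
    (hV : V ∈ identityOutside s) (A : Matrix m n R) {i : m} (hA : ∀ l ∈ s, A i l = 0) (c : n) :
    (A * V) i c = A i c := by
  rw [Matrix.mul_apply, ← Finset.sum_subset (Finset.subset_univ {c})]
  · by_cases hcs : c ∈ s
    · simp [hA c hcs]
    · simp [hV c c (.inr hcs)]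
  · intro l _ hl
    by_cases hls : l ∈ s
    · simp [hA l hls]
    · simp [hV l c (.inl hls), Finset.notMem_singleton.mp hl]

-- `(x, 0) ↦ (x, x) ↦ (0, x)`
lemma exists_mul_apply_eq_zero_of_eq_zero (A : Matrix m n R) (i : m) {j k : n} (hjk : j ≠ k)
    (hk : A i k = 0) :
    ∃ V : Matrix n n R, IsUnit V ∧ V ∈ identityOutside {j, k} ∧ (A * V) i j = 0 := by
  refine ⟨transvection j k 1 * transvection k j (-1),
    (isUnit_transvection hjk 1).mul (isUnit_transvection hjk.symm (-1)),
    mul_mem (transvection_mem_identityOutside (by simp) (by simp) 1)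
      (transvection_mem_identityOutside (by simp) (by simp) (-1)), ?_⟩
  rw [← Matrix.mul_assoc, mul_transvection_apply_same, mul_transvection_apply_same,
    mul_transvection_apply_of_ne _ _ hjk, hk]
  noncomm_ring

variable (deg : R → ℕ) (hdiv : ∀ a b : R, b ≠ 0 → ∃ q, deg (a - b * q) < deg b)
include hdiv

lemma exists_mul_apply_eq_zero (A : Matrix m n R) (i : m) {j k : n} (hjk : j ≠ k) :
    ∃ V : Matrix n n R, IsUnit V ∧ V ∈ identityOutside {j, k} ∧ (A * V) i j = 0 := by
  induction hN : deg (A i k) using Nat.strong_induction_on generalizing A j k with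
  | _ N ih =>
  by_cases hk : A i k = 0
  · exact exists_mul_apply_eq_zero_of_eq_zero A i hjk hk
  -- One division step replaces the pair `(x, y)` by `(x - y * q, y)`; then recurse with the
  -- roles of the two columns exchanged.
  obtain ⟨q, hq⟩ := hdiv (A i j) (A i k) hk
  have hA₁ : (A * transvection k j (-q)) i j = A i j - A i k * q := by
    rw [mul_transvection_apply_same, mul_neg, sub_eq_add_neg]
  obtain ⟨W, hWu, hW, hA₁W⟩ := ih _ (hN ▸ hA₁ ▸ hq) _ hjk.symm rfl
  obtain ⟨Z, hZu, hZ, hA₁WZ⟩ := exists_mul_apply_eq_zero_of_eq_zero _ i hjk hA₁W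
  refine ⟨transvection k j (-q) * W * Z,
    ((isUnit_transvection hjk.symm _).mul hWu).mul hZu,
    mul_mem (mul_mem (transvection_mem_identityOutside (by simp) (by simp) _) ?_) hZ, ?_⟩
  · rwa [Set.pair_comm]
  · rwa [← Matrix.mul_assoc, ← Matrix.mul_assoc]

lemma exists_mul_apply_eq_zero_of_mem (A : Matrix m n R) (i : m) (p : n) (s : Finset n)
    (hp : p ∉ s) :
    ∃ V : Matrix n n R, IsUnit V ∧ V ∈ identityOutside (insert p s : Set n) ∧
      ∀ c ∈ s, (A * V) i c = 0 := by
  induction s using Finset.induction_on with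
  | empty => exact ⟨1, isUnit_one, one_mem _, by simp⟩
  | insert a s has ih =>
  obtain ⟨hpa, hps⟩ : p ≠ a ∧ p ∉ s := by simpa using hp
  obtain ⟨V, hVu, hV, hAV⟩ := ih hps
  obtain ⟨W, hWu, hW, hAVW⟩ := exists_mul_apply_eq_zero deg hdiv (A * V) i (Ne.symm hpa)
  refine ⟨V * W, hVu.mul hWu, mul_mem ?_ ?_, ?_⟩
  · exact identityOutside_mono (by simp [Set.insert_subset_insert, Set.subset_insert]) hV
  · exact identityOutside_mono (by simp [Set.pair_subset_iff]) hW
  · rw [Finset.forall_mem_insert, ← Matrix.mul_assoc]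
    refine ⟨hAVW, fun c hc => ?_⟩
    rw [mul_apply_of_mem_identityOutside_of_notMem hW _ _ (by
      simp only [Set.mem_insert_iff, Set.mem_singleton_iff, not_or]
      exact ⟨fun h => has (h ▸ hc), fun h => hps (h ▸ hc)⟩), hAV c hc]

theorem exists_isUnit_blockTriangular_mul [LinearOrder n] (A : Matrix n n R) :
    ∃ V : Matrix n n R, IsUnit V ∧ (A * V).BlockTriangular id := by
  suffices h : ∀ s : Finset n,
      ∃ V : Matrix n n R, IsUnit V ∧ ∀ i ∈ s, ∀ j, j < i → (A * V) i j = 0 by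
    obtain ⟨V, hVu, hV⟩ := h Finset.univ
    exact ⟨V, hVu, fun i j hji => hV i (Finset.mem_univ i) j hji⟩
  intro s
  induction s using Finset.induction_on_min with
  | empty => exact ⟨1, isUnit_one, by simp⟩
  | insert a s has ih =>
  obtain ⟨V, hVu, hV⟩ := ih
  obtain ⟨W, hWu, hW, hAVW⟩ :=
    exists_mul_apply_eq_zero_of_mem deg hdiv (A * V) a a (Finset.univ.filter (· < a)) (by simp)
  refine ⟨V * W, hVu.mul hWu, ?_⟩
  rw [Finset.forall_mem_insert, ← Matrix.mul_assoc]
  refine ⟨fun j hj => hAVW j (by simpa using hj), fun i hi j hj => ?_⟩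
  have hrow : ∀ l ∈ (insert a (Finset.univ.filter (· < a)) : Set n), (A * V) i l = 0 := by
    intro l hl
    refine hV i hi l ((?_ : l ≤ a).trans_lt (has i hi))
    rcases hl with rfl | hl
    · exact le_rfl
    · exact (Finset.mem_filter.mp hl).2.le
  rw [mul_apply_of_mem_identityOutside_of_row_eq_zero hW _ hrow, hV i hi j hj]

end ColumnReduction

namespace DiffOpRing

variable {K : Type} [Field K] {d : K → K} {R : Type} [Ring R] (S : DiffOpRing K d R)

def filtration (N : ℕ) : AddSubgroup R :=
  AddSubgroup.closure {r | ∃ a : K, ∃ i < N, S.ι a * S.dop ^ i = r}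

variable {S}

lemma monomial_mem_filtration (a : K) {i N : ℕ} (hi : i < N) :
    S.ι a * S.dop ^ i ∈ S.filtration N :=
  AddSubgroup.subset_closure ⟨a, i, hi, rfl⟩

lemma filtration_mono : Monotone S.filtration := fun _ _ hNM =>
  AddSubgroup.closure_mono fun _ ⟨a, i, hi, hr⟩ => ⟨a, i, hi.trans_le hNM, hr⟩

lemma filtration_zero : S.filtration 0 = ⊥ := by
  simp [filtration]

lemma filtration_le_comap {N M : ℕ} (f : R →+ R)
    (hf : ∀ (a : K) (i : ℕ), i < N → f (S.ι a * S.dop ^ i) ∈ S.filtration M) :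
    S.filtration N ≤ (S.filtration M).comap f :=
  (AddSubgroup.closure_le _).mpr fun _ ⟨a, i, hi, hr⟩ => hr ▸ hf a i hi

lemma ι_mul_mem_filtration (c : K) {r : R} {N : ℕ} (hr : r ∈ S.filtration N) :
    S.ι c * r ∈ S.filtration N :=
  filtration_le_comap (AddMonoidHom.mulLeft (S.ι c)) (fun a i hi => by
    simpa [← mul_assoc, ← map_mul] using monomial_mem_filtration (c * a) hi) hr

lemma mul_dop_pow_mem_filtration (k : ℕ) {r : R} {N : ℕ} (hr : r ∈ S.filtration N) :
    r * S.dop ^ k ∈ S.filtration (N + k) :=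
  filtration_le_comap (AddMonoidHom.mulRight (S.dop ^ k)) (fun a i hi => by
    simpa [mul_assoc, ← pow_add] using monomial_mem_filtration a (Nat.add_lt_add_right hi k)) hr

lemma dop_mul_mem_filtration {r : R} {N : ℕ} (hr : r ∈ S.filtration N) :
    S.dop * r ∈ S.filtration (N + 1) := by
  refine filtration_le_comap (AddMonoidHom.mulLeft S.dop) (fun a i hi => ?_) hr
  have h : S.dop * (S.ι a * S.dop ^ i) = S.ι a * S.dop ^ (i + 1) + S.ι (d a) * S.dop ^ i := by
    rw [← mul_assoc, S.comm, add_mul, mul_assoc, ← pow_succ']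
  simpa [h] using add_mem (monomial_mem_filtration a (Nat.succ_lt_succ hi))
    (monomial_mem_filtration (d a) (hi.trans (Nat.lt_succ_self N)))

lemma dop_pow_mul_ι_sub_mem_filtration (c : K) (i : ℕ) :
    S.dop ^ i * S.ι c - S.ι c * S.dop ^ i ∈ S.filtration i := by
  induction i with
  | zero => simp
  | succ i ih =>
    have hc : S.dop * S.ι c - S.ι c * S.dop = S.ι (d c) := by rw [S.comm]; abel
    have h : S.dop ^ (i + 1) * S.ι c - S.ι c * S.dop ^ (i + 1) =
        S.dop * (S.dop ^ i * S.ι c - S.ι c * S.dop ^ i) + S.ι (d c) * S.dop ^ i := by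
      rw [← hc, pow_succ']; noncomm_ring
    rw [h]
    exact add_mem (dop_mul_mem_filtration ih) (monomial_mem_filtration _ (Nat.lt_succ_self i))

lemma mul_ι_mem_filtration (c : K) {r : R} {N : ℕ} (hr : r ∈ S.filtration N) :
    r * S.ι c ∈ S.filtration N := by
  refine filtration_le_comap (AddMonoidHom.mulRight (S.ι c)) (fun a i hi => ?_) hr
  have h : S.ι a * S.dop ^ i * S.ι c =
      S.ι a * (S.dop ^ i * S.ι c - S.ι c * S.dop ^ i) + S.ι (a * c) * S.dop ^ i := by
    rw [map_mul]; noncomm_ring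
  change S.ι a * S.dop ^ i * S.ι c ∈ _
  rw [h]
  exact add_mem (filtration_mono (S := S) hi.le
    (ι_mul_mem_filtration a (dop_pow_mul_ι_sub_mem_filtration c i)))
    (monomial_mem_filtration (a * c) hi)

lemma exists_sub_monomial_mem_filtration {r : R} {N : ℕ} (hr : r ∈ S.filtration (N + 1)) :
    ∃ a, r - S.ι a * S.dop ^ N ∈ S.filtration N := by
  induction hr using AddSubgroup.closure_induction with
  | mem r hr =>
    obtain ⟨a, i, hi, rfl⟩ := hr
    rcases (Nat.lt_succ_iff_lt_or_eq.mp hi) with hi | rfl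
    · exact ⟨0, by simpa using monomial_mem_filtration a hi⟩
    · exact ⟨a, by simp⟩
  | zero => exact ⟨0, by simp⟩
  | add r r' _ _ h h' =>
    obtain ⟨a, ha⟩ := h
    obtain ⟨a', ha'⟩ := h'
    exact ⟨a + a', by simpa [map_add, add_mul, add_sub_add_comm] using add_mem ha ha'⟩
  | neg r _ h =>
    obtain ⟨a, ha⟩ := h
    refine ⟨-a, ?_⟩
    rw [map_neg, neg_mul, sub_neg_eq_add, ← sub_eq_neg_add, ← neg_sub]
    exact neg_mem ha

lemma mul_monomial_sub_mem_filtration {b : R} {β : K} {m : ℕ}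
    (hb : b - S.ι β * S.dop ^ m ∈ S.filtration m) (c : K) (k : ℕ) :
    b * (S.ι c * S.dop ^ k) - S.ι (β * c) * S.dop ^ (m + k) ∈ S.filtration (m + k) := by
  have h : b * (S.ι c * S.dop ^ k) - S.ι (β * c) * S.dop ^ (m + k) =
      (b - S.ι β * S.dop ^ m) * S.ι c * S.dop ^ k +
        S.ι β * (S.dop ^ m * S.ι c - S.ι c * S.dop ^ m) * S.dop ^ k := by
    rw [map_mul, pow_add]; noncomm_ring
  rw [h]
  exact add_mem (mul_dop_pow_mem_filtration k (mul_ι_mem_filtration c hb))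
    (mul_dop_pow_mem_filtration k (ι_mul_mem_filtration β (dop_pow_mul_ι_sub_mem_filtration c m)))

lemma exists_sub_mul_mem_filtration {b : R} {β : K} {m : ℕ} (hβ : β ≠ 0)
    (hb : b - S.ι β * S.dop ^ m ∈ S.filtration m) (N : ℕ) :
    ∀ a ∈ S.filtration N, ∃ q, a - b * q ∈ S.filtration m := by
  induction N with
  | zero => exact fun a ha => ⟨0, by simpa using filtration_mono (Nat.zero_le m) ha⟩
  | succ N ih =>
  intro a ha
  by_cases hmN : m ≤ N
  swap
  · exact ⟨0, by simpa using filtration_mono (by omega) ha⟩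
  obtain ⟨α, hα⟩ := exists_sub_monomial_mem_filtration ha
  have hlead := mul_monomial_sub_mem_filtration hb (β⁻¹ * α) (N - m)
  rw [Nat.add_sub_cancel' hmN, mul_inv_cancel_left₀ hβ] at hlead
  set q₀ := S.ι (β⁻¹ * α) * S.dop ^ (N - m)
  obtain ⟨q, hq⟩ := ih (a - b * q₀) (by simpa using sub_mem hα hlead)
  exact ⟨q₀ + q, by rwa [mul_add, ← sub_sub]⟩

lemma exists_mem_filtration (r : R) : ∃ N, r ∈ S.filtration N := by
  obtain ⟨c, hc, -⟩ := S.repr r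
  exact ⟨c.support.sup id + 1, hc ▸ AddSubgroup.sum_mem _ fun i hi =>
    monomial_mem_filtration _ (Nat.lt_succ_of_le (Finset.le_sup (f := id) hi))⟩

variable (S)

open Classical in
/-- One more than the degree, with `order 0 = 0`. -/
noncomputable def order (r : R) : ℕ := Nat.find (exists_mem_filtration (S := S) r)

variable {S}

open Classical in
lemma mem_filtration_iff_order_le {r : R} {N : ℕ} : r ∈ S.filtration N ↔ S.order r ≤ N :=
  ⟨fun h => Nat.find_min' _ h, fun h => filtration_mono h (Nat.find_spec (exists_mem_filtration r))⟩

theorem exists_order_sub_mul_lt (a : R) {b : R} (hb : b ≠ 0) :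
    ∃ q, S.order (a - b * q) < S.order b := by
  obtain ⟨m, hm⟩ : ∃ m, S.order b = m + 1 := Nat.exists_eq_succ_of_ne_zero fun h => hb <| by
    simpa [filtration_zero] using mem_filtration_iff_order_le.mpr h.le
  obtain ⟨β, hβ⟩ := exists_sub_monomial_mem_filtration (mem_filtration_iff_order_le.mpr hm.le)
  have hβ0 : β ≠ 0 := fun h => by
    have := mem_filtration_iff_order_le.mp (by simpa [h] using hβ)
    omega
  obtain ⟨q, hq⟩ := exists_sub_mul_mem_filtration hβ0 hβ _ a
    (mem_filtration_iff_order_le.mpr le_rfl)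
  exact ⟨q, hm ▸ Nat.lt_succ_of_le (mem_filtration_iff_order_le.mp hq)⟩

end DiffOpRing

theorem stmt_10_general (K : Type) [Field K] (d : K → K)
    (R : Type) [Ring R] (S : DiffOpRing K d R)
    (n : ℕ) (A : Matrix (Fin n) (Fin n) R) :
    ∃ U T : Matrix (Fin n) (Fin n) R,
      IsUnit U ∧ (∀ i j : Fin n, j < i → T i j = 0) ∧ A = T * U := by
  obtain ⟨V, hV, hAV⟩ := ColumnReduction.exists_isUnit_blockTriangular_mul S.order
    (fun a _ hb => S.exists_order_sub_mul_lt a hb) A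
  exact ⟨↑hV.unit⁻¹, A * V, hV.unit⁻¹.isUnit, fun _ _ hji => hAV hji,
    by rw [Matrix.mul_assoc, hV.mul_val_inv, Matrix.mul_one]⟩

/-- Let K be a differential field of characteristic 0. Any matrix
A ∈ M_n(K[∂]) can be written as A = T U with T upper triangular and
U invertible in M_n(K[∂]). -/
theorem stmt_10 (K : Type) [Field K] [CharZero K] (d : K → K)
    (hd_add : ∀ a b : K, d (a + b) = d a + d b)
    (hd_mul : ∀ a b : K, d (a * b) = a * d b + d a * b)
    (R : Type) [Ring R] (S : DiffOpRing K d R)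
    (n : ℕ) (A : Matrix (Fin n) (Fin n) R) :
    ∃ U T : Matrix (Fin n) (Fin n) R,
      IsUnit U ∧ (∀ i j : Fin n, j < i → T i j = 0) ∧ A = T * U :=
  stmt_10_general K d R S n A
end

section
/- Let K be a differential field of characteristic 0 and let A, B ∈ M_n(K[∂]) be non-degenerate matrix differential operators (non-zero Dieudonné determinant). Then there exist non-degenerate C, D ∈ M_n(K[∂]) such that AC = BD (the right Ore condition for non-degenerate matrix differential operators). -/
/-- A matrix differential operator is non-degenerate (non-zero Dieudonné determinant,
i.e. invertible over the skewfield of pseudodifferential operators) if and only if it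
has trivial right kernel over K[∂]. -/
def Nondeg {n : ℕ} {R : Type} [Ring R] (A : Matrix (Fin n) (Fin n) R) : Prop :=
  ∀ X : Fin n → R, A.mulVec X = 0 → X = 0

namespace Nondeg

variable {n : ℕ} {R : Type} [Ring R]

theorem mul {A C : Matrix (Fin n) (Fin n) R} (hA : Nondeg A) (hC : Nondeg C) :
    Nondeg (A * C) :=
  fun X hX => hC X (hA _ (by rwa [Matrix.mulVec_mulVec]))

theorem of_mul {B D : Matrix (Fin n) (Fin n) R} (h : Nondeg (B * D)) : Nondeg D :=
  fun X hX => h X (by rw [← Matrix.mulVec_mulVec, hX, Matrix.mulVec_zero])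

theorem diagonal [NoZeroDivisors R] {r : Fin n → R} (hr : ∀ i, r i ≠ 0) :
    Nondeg (Matrix.diagonal r) := fun X hX => funext fun i => by
  simpa [Matrix.mulVec_diagonal, hr i] using congrFun hX i

end Nondeg

open Finsupp Set Module in
theorem exists_ne_zero_apply_eq_apply_of_supported {K ι : Type*} [Field K] [Fintype ι] (m : ℕ)
    (T : (ℕ →₀ K) →ₗ[K] (ι → ℕ →₀ K)) (U : (ι → ℕ →₀ K) →ₗ[K] (ι → ℕ →₀ K))
    (hU : Function.Injective U)
    (hT_deg : ∀ N, ∀ c ∈ supported K K (Iio N), ∀ i, T c i ∈ supported K K (Iio (N + m)))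
    (hU_deg : ∀ N e, (∀ k, e k ∈ supported K K (Iio N)) →
      ∀ i, U e i ∈ supported K K (Iio (N + m))) :
    ∃ c e, c ≠ 0 ∧ T c = U e := by
  set N := Fintype.card ι * m + 1
  let pad : (Fin N → K) →ₗ[K] (ℕ →₀ K) :=
    lmapDomain K K Fin.val ∘ₗ (linearEquivFunOnFinite K K (Fin N)).symm.toLinearMap
  have pad_injective : Function.Injective pad := (mapDomain_injective Fin.val_injective).comp
    (linearEquivFunOnFinite K K (Fin N)).symm.injective
  have pad_mem (x : Fin N → K) : pad x ∈ supported K K (Iio N) := fun t ht => by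
    obtain ⟨i, -, rfl⟩ := Finset.mem_image.1 (mapDomain_support ht)
    exact i.isLt
  let padPi : (ι → Fin N → K) →ₗ[K] (ι → ℕ →₀ K) := LinearMap.pi fun k => pad ∘ₗ LinearMap.proj k
  let trunc : (ι → ℕ →₀ K) →ₗ[K] (ι → Fin (N + m) → K) :=
    { toFun := fun w i t => w i t
      map_add' := fun _ _ => rfl
      map_smul' := fun _ _ => rfl }
  let Φ := trunc ∘ₗ (T ∘ₗ pad ∘ₗ LinearMap.fst K _ _ - U ∘ₗ padPi ∘ₗ LinearMap.snd K _ _)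
  -- `N + card ι * N > card ι * (N + m)` precisely because `N > card ι * m`
  have hdim : finrank K (ι → Fin (N + m) → K) < finrank K ((Fin N → K) × (ι → Fin N → K)) := by
    simp only [finrank_prod, finrank_pi_fintype, finrank_self, Finset.sum_const,
      Finset.card_univ, smul_eq_mul, Fintype.card_fin, mul_one]
    have : N = Fintype.card ι * m + 1 := rfl
    nlinarith
  obtain ⟨⟨x, y⟩, hker, hne⟩ := Submodule.exists_mem_ne_zero_of_ne_bot
    (LinearMap.ker_ne_bot_of_finrank_lt hdim)
  have hTU : T (pad x) = U (padPi y) := by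
    refine funext fun i => Finsupp.ext fun t => sub_eq_zero.1 ?_
    by_cases ht : t < N + m
    · exact congrFun (congrFun ((LinearMap.mem_ker (f := Φ)).1 hker) i) ⟨t, ht⟩
    · have hmem := sub_mem (hT_deg N _ (pad_mem x) i) (hU_deg N _ (fun k => pad_mem (y k)) i)
      exact notMem_support_iff.1 fun h => ht (hmem h)
  refine ⟨pad x, padPi y, fun h0 => hne ?_, hTU⟩
  have hx : x = 0 := pad_injective (by simpa using h0)
  have hy : padPi y = 0 := hU (by rw [← hTU, h0, map_zero, map_zero])
  simp only [hx, Prod.mk_eq_zero, true_and]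
  exact funext fun k => pad_injective (by simpa [padPi] using congrFun hy k)

namespace DiffOpRing

variable {K : Type} [Field K] {d : K → K} {R : Type} [Ring R] (S : DiffOpRing K d R)

def degreeLT (N : ℕ) : AddSubgroup R :=
  AddSubgroup.closure {r | ∃ a, ∃ i < N, r = S.ι a * S.dop ^ i}

variable {S}

theorem ι_mul_dop_pow_mem_degreeLT {N i : ℕ} (a : K) (h : i < N) :
    S.ι a * S.dop ^ i ∈ S.degreeLT N :=
  AddSubgroup.subset_closure ⟨a, i, h, rfl⟩

theorem degreeLT_mono : Monotone S.degreeLT := fun _ _ h =>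
  AddSubgroup.closure_mono fun _ ⟨a, i, hi, hr⟩ => ⟨a, i, hi.trans_le h, hr⟩

theorem degreeLT_zero : S.degreeLT 0 = ⊥ := by
  simp [degreeLT]

theorem apply_mem_degreeLT {N M : ℕ} (f : R →+ R)
    (hf : ∀ a, ∀ i < N, f (S.ι a * S.dop ^ i) ∈ S.degreeLT M) {r : R}
    (hr : r ∈ S.degreeLT N) : f r ∈ S.degreeLT M := by
  suffices S.degreeLT N ≤ (S.degreeLT M).comap f from this hr
  exact (AddSubgroup.closure_le _).2 fun _ ⟨a, i, hi, hr⟩ => hr ▸ hf a i hi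

theorem ι_mul_mem_degreeLT {N : ℕ} (a : K) {r : R} (hr : r ∈ S.degreeLT N) :
    S.ι a * r ∈ S.degreeLT N :=
  apply_mem_degreeLT (AddMonoidHom.mulLeft (S.ι a)) (fun b i hi => by
    simpa [← mul_assoc, ← map_mul] using ι_mul_dop_pow_mem_degreeLT (a * b) hi) hr

theorem mul_dop_pow_mem_degreeLT {N : ℕ} (j : ℕ) {r : R} (hr : r ∈ S.degreeLT N) :
    r * S.dop ^ j ∈ S.degreeLT (N + j) :=
  apply_mem_degreeLT (AddMonoidHom.mulRight (S.dop ^ j)) (fun b i hi => by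
    simpa [mul_assoc, ← pow_add] using ι_mul_dop_pow_mem_degreeLT b (by omega : i + j < N + j)) hr

theorem dop_mul_mem_degreeLT {N : ℕ} {r : R} (hr : r ∈ S.degreeLT N) :
    S.dop * r ∈ S.degreeLT (N + 1) := by
  refine apply_mem_degreeLT (AddMonoidHom.mulLeft S.dop) (fun b i hi => ?_) hr
  have : S.dop * (S.ι b * S.dop ^ i) = S.ι b * S.dop ^ (i + 1) + S.ι (d b) * S.dop ^ i := by
    rw [← mul_assoc, S.comm, add_mul, mul_assoc, pow_succ']
  simpa [this] using add_mem (ι_mul_dop_pow_mem_degreeLT b (by omega : i + 1 < N + 1))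
    (ι_mul_dop_pow_mem_degreeLT (d b) (by omega : i < N + 1))

theorem dop_pow_mul_ι_sub_mem_degreeLT (i : ℕ) (a : K) :
    S.dop ^ i * S.ι a - S.ι a * S.dop ^ i ∈ S.degreeLT i := by
  induction i with
  | zero => simp
  | succ i ih =>
    have : S.dop ^ (i + 1) * S.ι a - S.ι a * S.dop ^ (i + 1) =
        S.dop * (S.dop ^ i * S.ι a - S.ι a * S.dop ^ i) + S.ι (d a) * S.dop ^ i := by
      rw [mul_sub, ← mul_assoc, ← pow_succ', ← mul_assoc, S.comm, add_mul, mul_assoc,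
        ← pow_succ']
      abel
    rw [this]
    exact add_mem (dop_mul_mem_degreeLT ih) (ι_mul_dop_pow_mem_degreeLT _ (by omega))

theorem dop_pow_mul_ι_mem_degreeLT {N i : ℕ} (a : K) (h : i < N) :
    S.dop ^ i * S.ι a ∈ S.degreeLT N := by
  simpa using add_mem (degreeLT_mono (S := S) h.le (dop_pow_mul_ι_sub_mem_degreeLT i a))
    (ι_mul_dop_pow_mem_degreeLT a h)

theorem mul_mem_degreeLT {M N : ℕ} {r s : R} (hr : r ∈ S.degreeLT M)
    (hs : s ∈ S.degreeLT N) : r * s ∈ S.degreeLT (M + N - 1) := by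
  refine apply_mem_degreeLT (AddMonoidHom.mulRight s) (fun a i hi => ?_) hr
  refine apply_mem_degreeLT (AddMonoidHom.mulLeft _) (fun b j hj => ?_) hs
  have := mul_dop_pow_mem_degreeLT j (dop_pow_mul_ι_mem_degreeLT (S := S) b (Nat.lt_succ_self i))
  simpa [mul_assoc] using ι_mul_mem_degreeLT a (degreeLT_mono (S := S) (by omega) this)

variable (S) in
noncomputable def ofLeftCoeff : (ℕ →₀ K) →+ R :=
  Finsupp.liftAddHom fun i => (AddMonoidHom.mulRight (S.dop ^ i)).comp S.ι.toAddMonoidHom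

theorem ofLeftCoeff_apply (c : ℕ →₀ K) :
    S.ofLeftCoeff c = c.sum fun i a => S.ι a * S.dop ^ i :=
  Finsupp.liftAddHom_apply _ _

theorem exists_mem_degreeLT (r : R) : ∃ N, r ∈ S.degreeLT N := by
  obtain ⟨c, rfl, -⟩ := S.repr r
  exact ⟨c.support.sup id + 1, sum_mem fun i hi =>
    ι_mul_dop_pow_mem_degreeLT _ (Nat.lt_succ_of_le (Finset.le_sup (f := id) hi))⟩

theorem degreeLT_le_map_ofLeftCoeff (N : ℕ) :
    S.degreeLT N ≤ (Finsupp.supported K K (Set.Iio N)).toAddSubgroup.map S.ofLeftCoeff :=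
  (AddSubgroup.closure_le _).2 fun _ ⟨a, i, hi, hr⟩ =>
    ⟨Finsupp.single i a, Finsupp.single_mem_supported K a hi, by simp [hr, ofLeftCoeff]⟩

theorem ι_mul_dop_pow_mem_degreeLT_iff {N : ℕ} {a : K} :
    S.ι a * S.dop ^ N ∈ S.degreeLT N ↔ a = 0 := by
  refine ⟨fun h => ?_, fun h => by simp [h]⟩
  obtain ⟨c, hc, hca⟩ := degreeLT_le_map_ofLeftCoeff N h
  have hsingle : S.ι a * S.dop ^ N = S.ofLeftCoeff (Finsupp.single N a) := by simp [ofLeftCoeff]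
  have : c = Finsupp.single N a :=
    (S.repr _).unique (by rw [← ofLeftCoeff_apply, hca]) (by rw [← ofLeftCoeff_apply, hsingle])
  have hN : c N = 0 := Finsupp.notMem_support_iff.1 fun h => (lt_irrefl N) (hc h)
  simpa [this] using hN

theorem exists_sub_ι_mul_dop_pow_mem_degreeLT {N : ℕ} {r : R} (hr : r ∈ S.degreeLT (N + 1)) :
    ∃ a, r - S.ι a * S.dop ^ N ∈ S.degreeLT N := by
  induction hr using AddSubgroup.closure_induction with
  | mem r hr =>
    obtain ⟨b, i, hi, rfl⟩ := hr
    rcases (Nat.lt_succ_iff_lt_or_eq.1 hi) with hi | rfl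
    · exact ⟨0, by simpa using ι_mul_dop_pow_mem_degreeLT b hi⟩
    · exact ⟨b, by rw [sub_self]; exact zero_mem _⟩
  | zero => exact ⟨0, by simp⟩
  | add r s _ _ hr hs =>
    obtain ⟨a, ha⟩ := hr
    obtain ⟨b, hb⟩ := hs
    exact ⟨a + b, by simpa [add_mul, add_sub_add_comm] using add_mem ha hb⟩
  | neg r _ hr =>
    obtain ⟨a, ha⟩ := hr
    exact ⟨-a, by convert neg_mem ha using 1; simp only [map_neg, neg_mul]; abel⟩

theorem exists_leading_term {r : R} (hr : r ≠ 0) :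
    ∃ N a, a ≠ 0 ∧ r - S.ι a * S.dop ^ N ∈ S.degreeLT N := by
  obtain ⟨N, hN⟩ := exists_mem_degreeLT (S := S) r
  induction N with
  | zero => simp [degreeLT_zero, hr] at hN
  | succ N ih =>
    obtain ⟨a, ha⟩ := exists_sub_ι_mul_dop_pow_mem_degreeLT hN
    by_cases h0 : a = 0
    · exact ih (by simpa [h0] using ha)
    · exact ⟨N, a, h0, ha⟩

theorem noZeroDivisors (S : DiffOpRing K d R) : NoZeroDivisors R := by
  refine ⟨fun {r s} hrs => ?_⟩
  by_contra! h
  obtain ⟨N, a, ha, hr⟩ := exists_leading_term (S := S) h.1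
  obtain ⟨M, b, hb, hs⟩ := exists_leading_term (S := S) h.2
  have hs_mem : s ∈ S.degreeLT (M + 1) := by
    simpa using add_mem (degreeLT_mono (S := S) M.le_succ hs)
      (ι_mul_dop_pow_mem_degreeLT b M.lt_succ_self)
  have hs' : s - S.dop ^ M * S.ι b ∈ S.degreeLT M := by
    simpa using sub_mem hs (dop_pow_mul_ι_sub_mem_degreeLT M b)
  have hX : (r - S.ι a * S.dop ^ N) * s ∈ S.degreeLT (N + M) := by
    simpa [Nat.add_sub_cancel, add_assoc] using mul_mem_degreeLT hr hs_mem
  have hY : S.ι a * S.dop ^ N * (s - S.dop ^ M * S.ι b) ∈ S.degreeLT (N + M) := by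
    simpa [Nat.add_sub_cancel, add_right_comm N 1 M] using
      mul_mem_degreeLT (ι_mul_dop_pow_mem_degreeLT a N.lt_succ_self) hs'
  have hZ := ι_mul_mem_degreeLT a (dop_pow_mul_ι_sub_mem_degreeLT (S := S) (N + M) b)
  -- the leading term of `r * s` is `ι (a * b) * ∂ ^ (N + M)`
  have key : S.ι (a * b) * S.dop ^ (N + M) - r * s ∈ S.degreeLT (N + M) := by
    have : S.ι (a * b) * S.dop ^ (N + M) - r * s = -((r - S.ι a * S.dop ^ N) * s +
        S.ι a * S.dop ^ N * (s - S.dop ^ M * S.ι b) +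
        S.ι a * (S.dop ^ (N + M) * S.ι b - S.ι b * S.dop ^ (N + M))) := by
      rw [map_mul, pow_add]; noncomm_ring
    rw [this]
    exact neg_mem (add_mem (add_mem hX hY) hZ)
  rw [hrs, sub_zero, ι_mul_dop_pow_mem_degreeLT_iff] at key
  exact mul_ne_zero ha hb key

/- The coefficients on the left given by `repr` do not turn right multiplication by `ι a` into
scalar multiplication, which the dimension count needs: hence coefficients on the right. -/
variable (S) in
noncomputable def ofRightCoeff : (ℕ →₀ K) →+ R :=
  Finsupp.liftAddHom fun i => (AddMonoidHom.mulLeft (S.dop ^ i)).comp S.ι.toAddMonoidHom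

theorem ofRightCoeff_single (i : ℕ) (a : K) :
    S.ofRightCoeff (Finsupp.single i a) = S.dop ^ i * S.ι a := by
  simp [ofRightCoeff]

theorem ofRightCoeff_smul (a : K) (c : ℕ →₀ K) :
    S.ofRightCoeff (a • c) = S.ofRightCoeff c * S.ι a := by
  induction c using Finsupp.induction_linear with
  | zero => simp
  | add c c' hc hc' => rw [smul_add, map_add, hc, hc', map_add, add_mul]
  | single i b => rw [Finsupp.smul_single, ofRightCoeff_single, ofRightCoeff_single, smul_eq_mul,
      mul_comm, map_mul, mul_assoc]

theorem ofRightCoeff_mem_degreeLT {N : ℕ} {c : ℕ →₀ K}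
    (hc : c ∈ Finsupp.supported K K (Set.Iio N)) : S.ofRightCoeff c ∈ S.degreeLT N := by
  rw [ofRightCoeff, Finsupp.liftAddHom_apply]
  exact sum_mem fun i hi => dop_pow_mul_ι_mem_degreeLT _ (hc hi)

theorem degreeLT_le_map_ofRightCoeff (N : ℕ) :
    S.degreeLT N ≤ (Finsupp.supported K K (Set.Iio N)).toAddSubgroup.map S.ofRightCoeff := by
  induction N with
  | zero => simp [degreeLT_zero]
  | succ N ih =>
    refine (AddSubgroup.closure_le _).2 fun _ ⟨a, i, hi, hr⟩ => hr ▸ ?_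
    have hmono := AddSubgroup.map_mono (f := S.ofRightCoeff) <| Submodule.toAddSubgroup_mono <|
      Finsupp.supported_mono (M := K) (R := K) (Set.Iio_subset_Iio N.le_succ)
    have hlow := (ih.trans hmono) (degreeLT_mono (S := S) (Nat.lt_succ_iff.1 hi)
      (dop_pow_mul_ι_sub_mem_degreeLT i a))
    have hsingle : S.dop ^ i * S.ι a ∈
        (Finsupp.supported K K (Set.Iio (N + 1))).toAddSubgroup.map S.ofRightCoeff :=
      ⟨_, Finsupp.single_mem_supported K a hi, ofRightCoeff_single i a⟩
    simpa using sub_mem hsingle hlow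

theorem ofRightCoeff_injective : Function.Injective S.ofRightCoeff := by
  refine (injective_iff_map_eq_zero _).2 fun c hc => ?_
  suffices ∀ N, ∀ c ∈ Finsupp.supported K K (Set.Iio N), S.ofRightCoeff c = 0 → c = 0 from
    this _ c (fun i hi => Nat.lt_succ_of_le (Finset.le_sup (f := id) hi)) hc
  intro N
  induction N with
  | zero => simp [Finsupp.supported_empty]
  | succ N ih =>
    intro c hc hc0
    have herase : c.erase N ∈ Finsupp.supported K K (Set.Iio N) := fun i hi => by
      rw [Finset.mem_coe, Finsupp.support_erase, Finset.mem_erase] at hi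
      exact lt_of_le_of_ne (Nat.lt_succ_iff.1 (hc hi.2)) hi.1
    have hsplit := congrArg S.ofRightCoeff (Finsupp.single_add_erase N c)
    rw [map_add, ofRightCoeff_single, hc0] at hsplit
    have hlead : S.ι (c N) * S.dop ^ N ∈ S.degreeLT N := by
      have : S.ι (c N) * S.dop ^ N = -((S.dop ^ N * S.ι (c N) - S.ι (c N) * S.dop ^ N) +
          S.ofRightCoeff (c.erase N)) := by
        rw [← sub_eq_zero, ← hsplit]; abel
      rw [this]
      exact neg_mem (add_mem (dop_pow_mul_ι_sub_mem_degreeLT N _)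
        (ofRightCoeff_mem_degreeLT herase))
    rw [ι_mul_dop_pow_mem_degreeLT_iff] at hlead
    rw [hlead, map_zero, mul_zero, zero_add] at hsplit
    rw [← Finsupp.single_add_erase N c, hlead, Finsupp.single_zero, zero_add]
    exact ih _ herase hsplit

theorem ofRightCoeff_surjective : Function.Surjective S.ofRightCoeff := fun r => by
  obtain ⟨N, hN⟩ := exists_mem_degreeLT (S := S) r
  obtain ⟨c, -, hc⟩ := degreeLT_le_map_ofRightCoeff N hN
  exact ⟨c, hc⟩

variable (S) in
noncomputable def rightCoeff : R ≃+ (ℕ →₀ K) :=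
  (AddEquiv.ofBijective S.ofRightCoeff ⟨ofRightCoeff_injective, ofRightCoeff_surjective⟩).symm

@[simp]
theorem ofRightCoeff_rightCoeff (r : R) : S.ofRightCoeff (S.rightCoeff r) = r :=
  (AddEquiv.ofBijective S.ofRightCoeff _).apply_symm_apply r

@[simp]
theorem rightCoeff_ofRightCoeff (c : ℕ →₀ K) : S.rightCoeff (S.ofRightCoeff c) = c :=
  (AddEquiv.ofBijective S.ofRightCoeff _).symm_apply_apply c

theorem rightCoeff_mem_supported {N : ℕ} {r : R} (hr : r ∈ S.degreeLT N) :
    S.rightCoeff r ∈ Finsupp.supported K K (Set.Iio N) := by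
  obtain ⟨c, hc, rfl⟩ := degreeLT_le_map_ofRightCoeff N hr
  simpa using hc

theorem rightCoeff_mul_ι (r : R) (a : K) : S.rightCoeff (r * S.ι a) = a • S.rightCoeff r := by
  rw [← ofRightCoeff_rightCoeff (S := S) r, ← ofRightCoeff_smul]
  simp

variable (S) in
noncomputable def mulLeftCoeff (r : R) : (ℕ →₀ K) →ₗ[K] (ℕ →₀ K) where
  toFun c := S.rightCoeff (r * S.ofRightCoeff c)
  map_add' c c' := by simp [mul_add]
  map_smul' a c := by simp [ofRightCoeff_smul, ← mul_assoc, rightCoeff_mul_ι]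

theorem ofRightCoeff_mulLeftCoeff (r : R) (c : ℕ →₀ K) :
    S.ofRightCoeff (S.mulLeftCoeff r c) = r * S.ofRightCoeff c :=
  ofRightCoeff_rightCoeff _

theorem mulLeftCoeff_mem_supported {m N : ℕ} {r : R} (hr : r ∈ S.degreeLT m) {c : ℕ →₀ K}
    (hc : c ∈ Finsupp.supported K K (Set.Iio N)) :
    S.mulLeftCoeff r c ∈ Finsupp.supported K K (Set.Iio (N + m)) :=
  rightCoeff_mem_supported (degreeLT_mono (S := S) (by omega)
    (mul_mem_degreeLT hr (ofRightCoeff_mem_degreeLT hc)))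

theorem exists_ne_zero_mulVec_eq (S : DiffOpRing K d R) {ι : Type} [Fintype ι]
    {B : Matrix ι ι R} (hB : ∀ w, B.mulVec w = 0 → w = 0) (v : ι → R) :
    ∃ r w, r ≠ 0 ∧ B.mulVec w = fun i => v i * r := by
  obtain ⟨m, hm⟩ : ∃ m, ∀ x : ι ⊕ ι × ι,
      Sum.elim v (fun p => B p.1 p.2) x ∈ S.degreeLT m := by
    choose N hN using fun x : ι ⊕ ι × ι => exists_mem_degreeLT (S := S) (Sum.elim v _ x)
    obtain ⟨m, hm⟩ := Finite.bddAbove_range N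
    exact ⟨m, fun x => degreeLT_mono (S := S) (hm ⟨x, rfl⟩) (hN x)⟩
  let T : (ℕ →₀ K) →ₗ[K] (ι → ℕ →₀ K) := LinearMap.pi fun i => S.mulLeftCoeff (v i)
  let U : (ι → ℕ →₀ K) →ₗ[K] (ι → ℕ →₀ K) :=
    LinearMap.pi fun i => ∑ k, S.mulLeftCoeff (B i k) ∘ₗ LinearMap.proj k
  have hU (e : ι → ℕ →₀ K) : S.ofRightCoeff ∘ U e = B.mulVec (S.ofRightCoeff ∘ e) := by
    ext i
    simp [U, map_sum, ofRightCoeff_mulLeftCoeff, Matrix.mulVec, dotProduct]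
  have hU_injective : Function.Injective U := (injective_iff_map_eq_zero U).2 fun e he => by
    have := hB _ (by rw [← hU, he]; ext; simp)
    exact funext fun k => ofRightCoeff_injective (by simpa using congrFun this k)
  obtain ⟨c, e, hc, hTU⟩ := exists_ne_zero_apply_eq_apply_of_supported m T U hU_injective
    (fun N c hc i => mulLeftCoeff_mem_supported (hm (.inl i)) hc)
    (fun N e he i => by
      simpa [U] using sum_mem fun k _ => mulLeftCoeff_mem_supported (hm (.inr (i, k))) (he k))
  refine ⟨S.ofRightCoeff c, S.ofRightCoeff ∘ e, ?_, ?_⟩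
  · exact fun h => hc (ofRightCoeff_injective (h.trans (map_zero _).symm))
  · rw [← hU, ← hTU]
    ext i
    simp [T, ofRightCoeff_mulLeftCoeff]

end DiffOpRing

theorem stmt_11_general (K : Type) [Field K] (d : K → K)
    (R : Type) [Ring R] (S : DiffOpRing K d R)
    (n : ℕ) (A B : Matrix (Fin n) (Fin n) R)
    (hA : Nondeg A) (hB : Nondeg B) :
    ∃ C D : Matrix (Fin n) (Fin n) R, Nondeg C ∧ Nondeg D ∧ A * C = B * D := by
  have := S.noZeroDivisors
  choose r w hr hw using fun j => S.exists_ne_zero_mulVec_eq hB fun i => A i j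
  have hAC : A * Matrix.diagonal r = B * Matrix.of fun i j => w j i := by
    ext i j
    rw [Matrix.mul_diagonal, Matrix.mul_apply]
    exact (congrFun (hw j) i).symm
  have hC := Nondeg.diagonal hr
  exact ⟨_, _, hC, Nondeg.of_mul (hAC ▸ hA.mul hC), hAC⟩

/-- Let K be a differential field of characteristic 0 and A, B ∈
M_n(K[∂]) non-degenerate. Then there exist non-degenerate C, D ∈ M_n(K[∂]) such that
AC = BD (right Ore condition for non-degenerate matrix differential operators). -/
theorem stmt_11 (K : Type) [Field K] [CharZero K] (d : K → K)
    (hd_add : ∀ a b : K, d (a + b) = d a + d b)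
    (hd_mul : ∀ a b : K, d (a * b) = a * d b + d a * b)
    (R : Type) [Ring R] (S : DiffOpRing K d R)
    (n : ℕ) (A B : Matrix (Fin n) (Fin n) R)
    (hA : Nondeg A) (hB : Nondeg B) :
    ∃ C D : Matrix (Fin n) (Fin n) R, Nondeg C ∧ Nondeg D ∧ A * C = B * D :=
  stmt_11_general K d R S n A B hA hB
end
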